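/- arXiv:1709.03899 — 3 statements merged into one kernel-verified Lean document; each statement's English description precedes it below -/
import Mathlib

section
/- Let G be a level-transitive subgroup of Aut(T) for a level homogeneous rooted tree T. Then every non-trivial normal subgroup N of G contains the derived subgroup rst_G(n)' of some level rigid stabilizer. -/
/-- `ValidWord m l` : `l` is a vertex of the rooted tree whose branching numbers are
given by `m` (the vertex `u` has exactly `m u` children, labelled `0, …, m u - 1`). -/
def ValidWord (m : List ℕ → ℕ) (l : List ℕ) : Prop :=
  ∀ i : Fin l.length, l.get i < m (l.take i)

/-- The vertex set of the rooted locally finite tree with branching function `m`. -/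
def VertT (m : List ℕ → ℕ) := {l : List ℕ // ValidWord m l}

/-- A permutation of the vertices is an automorphism of the rooted tree if it
preserves levels (distance from the root) and the prefix (ancestor) relation. -/
def IsTreeAut {m : List ℕ → ℕ} (f : Equiv.Perm (VertT m)) : Prop :=
  (∀ v : VertT m, (f v).1.length = v.1.length) ∧
    ∀ v w : VertT m, v.1 <+: w.1 → (f v).1 <+: (f w).1

/-- The automorphism group of the rooted locally finite tree with branching
function `m`. -/
def AutGT (m : List ℕ → ℕ) : Subgroup (Equiv.Perm (VertT m)) where
  carrier := {f | IsTreeAut f ∧ IsTreeAut f.symm}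
  one_mem' := ⟨⟨fun _ => rfl, fun _ _ h => h⟩, ⟨fun _ => rfl, fun _ _ h => h⟩⟩
  mul_mem' := by
    rintro f g ⟨⟨hf1, hf2⟩, ⟨hf3, hf4⟩⟩ ⟨⟨hg1, hg2⟩, ⟨hg3, hg4⟩⟩
    refine ⟨⟨fun v => ?_, fun v w h => ?_⟩, ⟨fun v => ?_, fun v w h => ?_⟩⟩
    · show (f (g v)).1.length = v.1.length
      rw [hf1, hg1]
    · exact hf2 _ _ (hg2 _ _ h)
    · show (g.symm (f.symm v)).1.length = v.1.length
      rw [hg3, hf3]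
    · exact hg4 _ _ (hf4 _ _ h)
  inv_mem' := by
    rintro f ⟨h1, h2⟩
    exact ⟨h2, by first | exact h1 | (rw [Equiv.Perm.inv_def, Equiv.symm_symm]; exact h1)⟩

/-- The pointwise stabilizer of level `n`. -/
def lvlStabT (m : List ℕ → ℕ) (n : ℕ) : Subgroup (AutGT m) where
  carrier := {f | ∀ v : VertT m, v.1.length = n → (f : Equiv.Perm (VertT m)) v = v}
  one_mem' := fun _ _ => rfl
  mul_mem' := by
    intro f g hf hg v hv
    show (f : Equiv.Perm (VertT m)) ((g : Equiv.Perm (VertT m)) v) = v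
    rw [hg v hv, hf v hv]
  inv_mem' := by
    intro f hf v hv
    have h2 : (f : Equiv.Perm (VertT m))⁻¹ v = v := by
      rw [Equiv.Perm.inv_eq_iff_eq]; exact (hf v hv).symm
    simpa using h2

/-- The subgroup of automorphisms supported on the subtree rooted at `u`. -/
def rigidT {m : List ℕ → ℕ} (u : VertT m) : Subgroup (AutGT m) where
  carrier := {f | ∀ w : VertT m, ¬ u.1 <+: w.1 → (f : Equiv.Perm (VertT m)) w = w}
  one_mem' := fun _ _ => rfl
  mul_mem' := by
    intro f g hf hg w hw
    show (f : Equiv.Perm (VertT m)) ((g : Equiv.Perm (VertT m)) w) = w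
    rw [hg w hw, hf w hw]
  inv_mem' := by
    intro f hf w hw
    have h2 : (f : Equiv.Perm (VertT m))⁻¹ w = w := by
      rw [Equiv.Perm.inv_eq_iff_eq]; exact (hf w hw).symm
    simpa using h2

/-- The rigid stabilizer in `G` of the level `n`: the subgroup generated by the
rigid vertex stabilizers `rst_G(u) = G ⊓ rigidT u` over the vertices `u` of level
`n` (as these pairwise commute, it is their product). -/
def ristLT {m : List ℕ → ℕ} (G : Subgroup (AutGT m)) (n : ℕ) : Subgroup (AutGT m) :=
  ⨆ u ∈ {u : VertT m | u.1.length = n}, G ⊓ rigidT u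

/-- `G` acts transitively on every level of the tree. -/
def LevelTransT {m : List ℕ → ℕ} (G : Subgroup (AutGT m)) : Prop :=
  ∀ u v : VertT m, u.1.length = v.1.length →
    ∃ g ∈ G, (g : Equiv.Perm (VertT m)) u = v

/-! A non-trivial `g ∈ N` moves some vertex `v`; by level transitivity a `G`-conjugate of `g` in
`N` moves any given vertex `u` on the level of `v`. For `a, b ∈ rst_G(u)` the element
`g a⁻¹ g⁻¹` is supported below `g u ≠ u`, so it commutes with `b`, and therefore
`⁅a, b⁆ = ⁅⁅a, g⁆, b⁆ ∈ N`. Rigid stabilizers of distinct vertices of one level commute, and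
`N` is normalized by `G`, so these commutators already force `⁅rst_G(n), rst_G(n)⁆ ≤ N`. -/

open scoped commutatorElement

namespace Subgroup

variable {H : Type*} [Group H] {N : Subgroup H}

lemma le_normalizer_of_conj_mem {K : Subgroup H} (hK : ∀ g ∈ K, ∀ x ∈ N, g * x * g⁻¹ ∈ N) :
    K ≤ normalizer N := fun g hg => mem_normalizer_iff.mpr fun x =>
  ⟨hK g hg x, fun hx => by simpa [mul_assoc] using hK g⁻¹ (inv_mem hg) _ hx⟩

lemma commutator_iSup_left_le {ι : Sort*} {S : ι → Subgroup H} {T : Subgroup H}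
    (hS : ∀ i, S i ≤ normalizer N) (h : ∀ i, ⁅S i, T⁆ ≤ N) : ⁅⨆ i, S i, T⁆ ≤ N := by
  rw [commutator_le]
  intro x hx y hy
  induction hx using iSup_induction' with
  | hp i x hx => exact commutator_le.mp (h i) x hx y hy
  | h1 => simp
  | hmul x₁ x₂ hx₁ _ h₁ h₂ =>
    have hid : ⁅x₁ * x₂, y⁆ = x₁ * ⁅x₂, y⁆ * x₁⁻¹ * ⁅x₁, y⁆ := by
      simp only [commutatorElement_def]; group
    rw [hid]
    exact mul_mem ((mem_normalizer_iff.mp (iSup_le hS hx₁) _).mp h₂) h₁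

lemma commutator_iSup_iSup_le {ι : Sort*} {S : ι → Subgroup H}
    (hS : ∀ i, S i ≤ normalizer N) (h : ∀ i j, ⁅S i, S j⁆ ≤ N) :
    ⁅⨆ i, S i, ⨆ i, S i⁆ ≤ N :=
  commutator_iSup_left_le hS fun i => by
    rw [commutator_comm]
    exact commutator_iSup_left_le hS fun j => h j i

lemma commutatorElement_mem_of_commute_conj {a b g : H} (ha : a ∈ normalizer N)
    (hb : b ∈ normalizer N) (hg : g ∈ N) (hcomm : Commute (g * a⁻¹ * g⁻¹) b) : ⁅a, b⁆ ∈ N := by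
  have hc : ⁅a, g⁆ ∈ N := by
    rw [commutatorElement_def]
    exact mul_mem ((mem_normalizer_iff.mp ha g).mp hg) (inv_mem hg)
  have hdb : g * a⁻¹ * g⁻¹ * b * (g * a⁻¹ * g⁻¹)⁻¹ = b := by
    rw [hcomm.eq, mul_inv_cancel_right]
  have hid : ⁅a, b⁆ = ⁅a, g⁆ * (b * ⁅a, g⁆⁻¹ * b⁻¹) :=
    calc ⁅a, b⁆ = a * (g * a⁻¹ * g⁻¹ * b * (g * a⁻¹ * g⁻¹)⁻¹) * a⁻¹ * b⁻¹ := by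
          rw [hdb, commutatorElement_def]
      _ = ⁅a, g⁆ * (b * ⁅a, g⁆⁻¹ * b⁻¹) := by simp only [commutatorElement_def]; group
  rw [hid]
  exact mul_mem hc ((mem_normalizer_iff.mp hb _).mp (inv_mem hc))

end Subgroup

namespace AutGT

variable {m : List ℕ → ℕ}

lemma _root_.VertT.eq_of_prefix_of_prefix {u v : VertT m} {p : List ℕ}
    (hl : u.1.length = v.1.length) (hu : u.1 <+: p) (hv : v.1 <+: p) : u = v :=
  Subtype.ext ((List.prefix_of_prefix_length_le hu hv hl.le).eq_of_length hl)

lemma apply_eq_or_prefix_apply_of_mem_rigidT {u : VertT m} {f : AutGT m} (hf : f ∈ rigidT u)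
    (w : VertT m) :
    (f : Equiv.Perm (VertT m)) w = w ∨ u.1 <+: ((f : Equiv.Perm (VertT m)) w).1 := by
  by_cases h : u.1 <+: ((f : Equiv.Perm (VertT m)) w).1
  · exact Or.inr h
  · left
    simpa using (congrArg (f : Equiv.Perm (VertT m)) (inv_mem hf _ h)).symm

lemma apply_apply_eq_of_mem_rigidT {u v : VertT m} (hne : u ≠ v) (hl : u.1.length = v.1.length)
    {x y : AutGT m} (hx : x ∈ rigidT u) (hy : y ∈ rigidT v) {w : VertT m} (hw : ¬ v.1 <+: w.1) :
    (y : Equiv.Perm (VertT m)) ((x : Equiv.Perm (VertT m)) w) = (x : Equiv.Perm (VertT m)) w := by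
  rcases apply_eq_or_prefix_apply_of_mem_rigidT hx w with h | h
  · rw [h, hy w hw]
  · exact hy _ fun h' => hne (VertT.eq_of_prefix_of_prefix hl h h')

lemma commutator_rigidT_eq_bot {u v : VertT m} (hne : u ≠ v) (hl : u.1.length = v.1.length) :
    ⁅rigidT u, rigidT v⁆ = ⊥ := by
  refine Subgroup.commutator_eq_bot_iff_le_centralizer.mpr fun x hx y hy => ?_
  refine Subtype.ext (Equiv.ext fun w => ?_)
  change (y : Equiv.Perm (VertT m)) ((x : Equiv.Perm (VertT m)) w)
    = (x : Equiv.Perm (VertT m)) ((y : Equiv.Perm (VertT m)) w)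
  by_cases hv : v.1 <+: w.1
  · have hu : ¬ u.1 <+: w.1 := fun hu => hne (VertT.eq_of_prefix_of_prefix hl hu hv)
    rw [hx w hu, apply_apply_eq_of_mem_rigidT hne.symm hl.symm hy hx hu]
  · rw [hy w hv, apply_apply_eq_of_mem_rigidT hne hl hx hy hv]

lemma conj_mem_rigidT {u : VertT m} (g : AutGT m) {a : AutGT m} (ha : a ∈ rigidT u) :
    g * a * g⁻¹ ∈ rigidT ((g : Equiv.Perm (VertT m)) u) := by
  intro p hp
  have hu : ¬ u.1 <+: ((g : Equiv.Perm (VertT m))⁻¹ p).1 := fun h => hp (by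
    simpa using g.2.1.2 _ _ h)
  change (g : Equiv.Perm (VertT m)) ((a : Equiv.Perm (VertT m))
    ((g : Equiv.Perm (VertT m))⁻¹ p)) = p
  rw [ha _ hu]
  simp

lemma commutator_inf_rigidT_le {G N : Subgroup (AutGT m)} (hGN : G ≤ Subgroup.normalizer N)
    {u : VertT m} {g : AutGT m} (hg : g ∈ N) (hgu : (g : Equiv.Perm (VertT m)) u ≠ u) :
    ⁅G ⊓ rigidT u, G ⊓ rigidT u⁆ ≤ N := by
  refine Subgroup.commutator_le.mpr fun a ha b hb =>
    Subgroup.commutatorElement_mem_of_commute_conj (hGN ha.1) (hGN hb.1) hg ?_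
  have hbot := commutator_rigidT_eq_bot hgu (g.2.1.1 u)
  exact (Subgroup.commutator_eq_bot_iff_le_centralizer.mp hbot
    (conj_mem_rigidT g (inv_mem ha.2)) b hb.2).symm

end AutGT

theorem stmt_5_general (m : List ℕ → ℕ)
    (G : Subgroup (AutGT m)) (htrans : LevelTransT G)
    (N : Subgroup (AutGT m))
    (hNnorm : ∀ g ∈ G, ∀ x ∈ N, g * x * g⁻¹ ∈ N)
    (hN : N ≠ ⊥) :
    ∃ n : ℕ, ⁅ristLT G n, ristLT G n⁆ ≤ N := by
  have hGN : G ≤ Subgroup.normalizer N := Subgroup.le_normalizer_of_conj_mem hNnorm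
  obtain ⟨g, hgN, hg1⟩ := N.bot_or_exists_ne_one.resolve_left hN
  obtain ⟨v, hv⟩ : ∃ v, (g : Equiv.Perm (VertT m)) v ≠ v := by
    by_contra! h
    exact hg1 (Subtype.ext (Equiv.ext h))
  refine ⟨v.1.length, ?_⟩
  rw [ristLT, iSup_subtype']
  refine Subgroup.commutator_iSup_iSup_le (fun u => inf_le_left.trans hGN) ?_
  rintro ⟨u, hu⟩ ⟨u', hu'⟩
  by_cases huu : u = u'
  · subst huu
    obtain ⟨h, hhG, rfl⟩ := htrans v u hu.symm
    refine AutGT.commutator_inf_rigidT_le hGN (hNnorm h hhG g hgN) ?_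
    simpa using hv
  · calc ⁅G ⊓ rigidT u, G ⊓ rigidT u'⁆ ≤ ⁅rigidT u, rigidT u'⁆ :=
          Subgroup.commutator_mono inf_le_right inf_le_right
      _ = ⊥ := AutGT.commutator_rigidT_eq_bot huu (hu.trans hu'.symm)
      _ ≤ N := bot_le

/-- Let `T` be a level homogeneous rooted locally finite tree (the
branching number `m u` of a vertex depends only on its level) and let `G ≤ Aut T`
act transitively on every level.  Then every non-trivial normal subgroup `N` of `G`
contains the derived subgroup of some level rigid stabilizer `rst_G(n)`. -/
theorem stmt_5 (m : List ℕ → ℕ)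
    (hhom : ∀ l l' : List ℕ, l.length = l'.length → m l = m l')
    (hpos : ∀ l : List ℕ, 1 ≤ m l)
    (G : Subgroup (AutGT m)) (htrans : LevelTransT G)
    (N : Subgroup (AutGT m)) (hNG : N ≤ G)
    (hNnorm : ∀ g ∈ G, ∀ x ∈ N, g * x * g⁻¹ ∈ N)
    (hN : N ≠ ⊥) :
    ∃ n : ℕ, ⁅ristLT G n, ristLT G n⁆ ≤ N :=
  stmt_5_general m G htrans N hNnorm hN
end

section
/- For the GGS-group G with constant defining vector, the rigid vertex stabilizer of any first-level vertex is contained in the derived subgroup of the first level stabilizer: rst_G(x) ≤ st_G(1)' for every first-level vertex x. Consequently rst_G(1) ≤ K, where K = ⟨ba⁻¹⟩^G. -/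
/-- The vertex set of the rooted `d`-regular tree: finite words over `Fin d`. -/
abbrev Vert (d : ℕ) := List (Fin d)

/-- A permutation of the vertices sends children of `v` to children of the image
of `v`. -/
def MapsChildren {d : ℕ} (f : Equiv.Perm (Vert d)) : Prop :=
  ∀ (v : Vert d) (i : Fin d), ∃ j : Fin d, f (v ++ [i]) = f v ++ [j]

/-- The automorphism group of the rooted `d`-regular tree, realised as the subgroup
of permutations of the vertex set which, together with their inverses, map children
to children (equivalently, preserve the root, the levels and the tree structure). -/
def AutT (d : ℕ) : Subgroup (Equiv.Perm (Vert d)) where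
  carrier := {f | MapsChildren f ∧ MapsChildren f.symm}
  one_mem' := ⟨fun v i => ⟨i, rfl⟩, fun v i => ⟨i, rfl⟩⟩
  mul_mem' := by
    rintro f g ⟨hf, hf'⟩ ⟨hg, hg'⟩
    refine ⟨fun v i => ?_, fun v i => ?_⟩
    · obtain ⟨j, hj⟩ := hg v i
      obtain ⟨k, hk⟩ := hf (g v) j
      exact ⟨k, by simp [Equiv.Perm.mul_apply, hj, hk]⟩
    · obtain ⟨j, hj⟩ := hf' v i
      obtain ⟨k, hk⟩ := hg' (f.symm v) j
      exact ⟨k, show g.symm (f.symm (v ++ [i])) = g.symm (f.symm v) ++ [k] by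
        rw [hj, hk]⟩
  inv_mem' := by
    rintro f ⟨hf, hf'⟩
    exact ⟨hf', by exact hf⟩

/-- The full pointwise stabilizer of level `n` in `Aut T`. -/
def lvlStab (d n : ℕ) : Subgroup (AutT d) where
  carrier := {f | ∀ v : Vert d, v.length = n → (f : Equiv.Perm (Vert d)) v = v}
  one_mem' := fun v _ => rfl
  mul_mem' := by
    intro f g hf hg v hv
    simp [Equiv.Perm.mul_apply, hg v hv, hf v hv]
  inv_mem' := by
    intro f hf v hv
    have h := hf v hv
    have h2 : (f : Equiv.Perm (Vert d))⁻¹ v = v := by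
      rw [Equiv.Perm.inv_eq_iff_eq]; exact h.symm
    simpa using h2

/-- The subgroup of automorphisms supported on the subtree rooted at the word `u`. -/
def rigid (d : ℕ) (u : Vert d) : Subgroup (AutT d) where
  carrier := {f | ∀ w : Vert d, ¬ u <+: w → (f : Equiv.Perm (Vert d)) w = w}
  one_mem' := fun w _ => rfl
  mul_mem' := by
    intro f g hf hg w hw
    simp [Equiv.Perm.mul_apply, hg w hw, hf w hw]
  inv_mem' := by
    intro f hf w hw
    have h := hf w hw
    have h2 : (f : Equiv.Perm (Vert d))⁻¹ w = w := by
      rw [Equiv.Perm.inv_eq_iff_eq]; exact h.symm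
    simpa using h2

/-- The rigid stabilizer in `G` of the vertex `u`. -/
def ristV {d : ℕ} (G : Subgroup (AutT d)) (u : Vert d) : Subgroup (AutT d) :=
  G ⊓ rigid d u

/-- The rigid stabilizer in `G` of level `n`: the subgroup generated by (equivalently,
the product of) the rigid vertex stabilizers at level `n`. -/
def ristL {d : ℕ} (G : Subgroup (AutT d)) (n : ℕ) : Subgroup (AutT d) :=
  ⨆ u ∈ {u : Vert d | u.length = n}, ristV G u

/-- `G` acts transitively on every level of the tree. -/
def LevelTransitive {d : ℕ} (G : Subgroup (AutT d)) : Prop :=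
  ∀ u v : Vert d, u.length = v.length → ∃ g ∈ G, (g : Equiv.Perm (Vert d)) u = v

section GGS

variable (p : ℕ) [NeZero p]

/-- The rooted automorphism `a` of the `p`-regular tree: it permutes the first-level
subtrees by the `p`-cycle `x ↦ x + 1`. -/
def gA : List (Fin p) → List (Fin p)
  | [] => []
  | x :: w => (x + 1) :: w

/-- The inverse of `gA`. -/
def gAI : List (Fin p) → List (Fin p)
  | [] => []
  | x :: w => (x - 1) :: w

/-- The directed automorphism `b = (a, a, …, a, b)` of the GGS-group with constant
defining vector. -/
def gB : List (Fin p) → List (Fin p)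
  | [] => []
  | x :: w => if (x : ℕ) = p - 1 then x :: gB w else x :: gA p w

/-- The inverse of `gB`. -/
def gBI : List (Fin p) → List (Fin p)
  | [] => []
  | x :: w => if (x : ℕ) = p - 1 then x :: gBI w else x :: gAI p w

theorem gAI_gA : ∀ l, gAI p (gA p l) = l
  | [] => rfl
  | x :: w => by simp [gA, gAI]

theorem gA_gAI : ∀ l, gA p (gAI p l) = l
  | [] => rfl
  | x :: w => by simp [gA, gAI]

theorem gBI_gB : ∀ l, gBI p (gB p l) = l
  | [] => rfl
  | x :: w => by
    by_cases h : (x : ℕ) = p - 1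
    · simp [gB, gBI, h, gBI_gB w]
    · simp [gB, gBI, h, gAI_gA]

theorem gB_gBI : ∀ l, gB p (gBI p l) = l
  | [] => rfl
  | x :: w => by
    by_cases h : (x : ℕ) = p - 1
    · simp [gB, gBI, h, gB_gBI w]
    · simp [gB, gBI, h, gA_gAI]

/-- `a` as a permutation of the vertices. -/
def aPerm : Equiv.Perm (Vert p) :=
  ⟨gA p, gAI p, gAI_gA p, gA_gAI p⟩

/-- `b` as a permutation of the vertices. -/
def bPerm : Equiv.Perm (Vert p) :=
  ⟨gB p, gBI p, gBI_gB p, gB_gBI p⟩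

theorem gA_append (v : Vert p) (i : Fin p) : ∃ j, gA p (v ++ [i]) = gA p v ++ [j] := by
  cases v with
  | nil => exact ⟨i + 1, rfl⟩
  | cons x w => exact ⟨i, rfl⟩

theorem gAI_append (v : Vert p) (i : Fin p) : ∃ j, gAI p (v ++ [i]) = gAI p v ++ [j] := by
  cases v with
  | nil => exact ⟨i - 1, rfl⟩
  | cons x w => exact ⟨i, rfl⟩

theorem gB_append : ∀ (v : Vert p) (i : Fin p), ∃ j, gB p (v ++ [i]) = gB p v ++ [j]
  | [], i => by
    by_cases h : (i : ℕ) = p - 1 <;> exact ⟨i, by simp [gB, gA, h]⟩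
  | x :: w, i => by
    by_cases h : (x : ℕ) = p - 1
    · obtain ⟨j, hj⟩ := gB_append w i
      exact ⟨j, by simp [gB, h, hj]⟩
    · obtain ⟨j, hj⟩ := gA_append p w i
      exact ⟨j, by simp [gB, h, hj]⟩

theorem gBI_append : ∀ (v : Vert p) (i : Fin p), ∃ j, gBI p (v ++ [i]) = gBI p v ++ [j]
  | [], i => by
    by_cases h : (i : ℕ) = p - 1 <;> exact ⟨i, by simp [gBI, gAI, h]⟩
  | x :: w, i => by
    by_cases h : (x : ℕ) = p - 1
    · obtain ⟨j, hj⟩ := gBI_append w i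
      exact ⟨j, by simp [gBI, h, hj]⟩
    · obtain ⟨j, hj⟩ := gAI_append p w i
      exact ⟨j, by simp [gBI, h, hj]⟩

/-- The generator `a` of the GGS-group, as a tree automorphism. -/
def aut_a : AutT p :=
  ⟨aPerm p, gA_append p, gAI_append p⟩

/-- The generator `b` of the GGS-group (constant defining vector), as a tree
automorphism. -/
def aut_b : AutT p :=
  ⟨bPerm p, gB_append p, gBI_append p⟩

/-- The GGS-group with constant defining vector: `G = ⟨a, b⟩`. -/
def GGS : Subgroup (AutT p) :=
  Subgroup.closure {aut_a p, aut_b p}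

/-- `K = ⟨b a⁻¹⟩^G`, the normal closure of `b a⁻¹` in `G`. -/
def GGSK : Subgroup (AutT p) :=
  Subgroup.closure {x | ∃ g ∈ GGS p, x = g * (aut_b p * (aut_a p)⁻¹) * g⁻¹}

end GGS

/-!
`st_G(1)` is generated by the conjugates `c_j = a^j b a^{-j}`, each of order `p`, so every class
of `st_G(1)/st_G(1)'` is `∏ c_j ^ i_j`. Reading off the exponents of `a` and of `b` (mod `p`)
in a section `g|ₖ` gives characters of `st_G(1)`, and on the generators
`bExp (c_j|ₖ) = [j = k + 1]`, `aExp (c_j|ₖ) = [j ≠ k + 1]`. For `g ∈ rist_G(x)` all sections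
`g|ₖ` with `k ≠ x` are trivial: the `b`-exponents at `k ≠ x` kill every `i_j` with `j ≠ x + 1`,
then the `a`-exponent at `x + 1` kills `i_{x+1}`. Hence `g ∈ st_G(1)'`.

For the second part, `b ≡ a` modulo `K` and `G` normalizes `K`, so `G ≤ K ⟨a⟩` has cyclic image
modulo `K`; thus `G' ≤ K`.
-/

open scoped commutatorElement

theorem Subgroup.exists_mul_zpow_eq_of_mem_sup {G : Type*} [Group G] {N : Subgroup G} {x : G}
    (hx : x ∈ normalizer (N : Set G)) {g : G} (hg : g ∈ N ⊔ zpowers x) :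
    ∃ n ∈ N, ∃ k : ℤ, n * x ^ k = g := by
  rw [← SetLike.mem_coe, coe_mul_of_right_le_normalizer_left N _ (zpowers_le.mpr hx)] at hg
  obtain ⟨n, hn, _, ⟨k, rfl⟩, rfl⟩ := hg
  exact ⟨n, hn, k, rfl⟩

theorem Abelianization.exists_of_eq_prod_zpow {H ι : Type*} [Group H] [Fintype ι] {c : ι → H}
    (hc : Subgroup.closure (Set.range c) = ⊤) (h : H) :
    ∃ i : ι → ℤ, Abelianization.of h = ∏ j, Abelianization.of (c j) ^ i j := by
  apply Subgroup.exists_of_mem_closure_range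
  rw [Set.range_comp', ← MonoidHom.map_closure, hc, ← MonoidHom.range_eq_map]
  exact ⟨h, rfl⟩

theorem Subgroup.commutator_sup_zpowers_le {G : Type*} [Group G] {N : Subgroup G} {x : G}
    (hx : x ∈ normalizer (N : Set G)) : ⁅N ⊔ zpowers x, N ⊔ zpowers x⁆ ≤ N := by
  rw [commutator_le]
  intro g₁ hg₁ g₂ hg₂
  obtain ⟨n₁, hn₁, k₁, rfl⟩ := exists_mul_zpow_eq_of_mem_sup hx hg₁
  obtain ⟨n₂, hn₂, k₂, rfl⟩ := exists_mul_zpow_eq_of_mem_sup hx hg₂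
  have hconj (k : ℤ) {n : G} (hn : n ∈ N) : x ^ k * n * (x ^ k)⁻¹ ∈ N :=
    (mem_normalizer_iff.mp (zpow_mem hx k) n).mp hn
  have h : ⁅n₁ * x ^ k₁, n₂ * x ^ k₂⁆
      = n₁ * (x ^ k₁ * n₂ * (x ^ k₁)⁻¹) * (x ^ k₂ * n₁⁻¹ * (x ^ k₂)⁻¹) * n₂⁻¹ := by
    rw [commutatorElement_def]
    group
  rw [h]
  exact mul_mem (mul_mem (mul_mem hn₁ (hconj k₁ hn₂)) (hconj k₂ (inv_mem hn₁))) (inv_mem hn₂)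

theorem Fin.val_eq_sub_one_iff_eq_neg_one {p : ℕ} [NeZero p] (x : Fin p) :
    (x : ℕ) = p - 1 ↔ x = -1 := by
  obtain ⟨q, rfl⟩ := Nat.exists_eq_succ_of_ne_zero (NeZero.ne p)
  rw [Fin.ext_iff, Fin.coe_neg_one]
  simp

theorem MapsChildren.exists_append_eq {d : ℕ} {f : Equiv.Perm (Vert d)} (hf : MapsChildren f)
    (v w : Vert d) : ∃ w', f (v ++ w) = f v ++ w' := by
  induction w using List.reverseRecOn with
  | nil => exact ⟨[], by simp⟩
  | append_singleton w i ih =>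
    obtain ⟨w', hw'⟩ := ih
    obtain ⟨j, hj⟩ := hf (v ++ w) i
    exact ⟨w' ++ [j], by rw [← List.append_assoc, hj, hw', List.append_assoc]⟩

namespace AutT

variable {d : ℕ}

theorem ext {f g : AutT d} (h : ∀ w : Vert d, f • w = g • w) : f = g :=
  Subtype.ext (Equiv.ext h)

theorem smul_nil (f : AutT d) : f • ([] : Vert d) = [] := by
  obtain ⟨w, hw⟩ := f.2.2.exists_append_eq [] (f • [])
  change (f : Equiv.Perm (Vert d)).symm ((f : Equiv.Perm (Vert d)) [])
    = (f : Equiv.Perm (Vert d)).symm [] ++ w at hw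
  rw [Equiv.symm_apply_apply, eq_comm, List.append_eq_nil_iff, Equiv.symm_apply_eq] at hw
  exact hw.1.symm

theorem exists_smul_singleton (f : AutT d) (k : Fin d) : ∃ j : Fin d, f • [k] = [j] := by
  obtain ⟨j, hj⟩ := f.2.1 [] k
  change f • [k] = f • [] ++ [j] at hj
  exact ⟨j, by rw [hj, smul_nil]; rfl⟩

noncomputable instance : MulAction (AutT d) (Fin d) where
  smul f k := (exists_smul_singleton f k).choose
  one_smul k := List.singleton_injective (exists_smul_singleton 1 k).choose_spec.symm
  mul_smul f g k := List.singleton_injective <|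
    (exists_smul_singleton (f * g) k).choose_spec.symm.trans <| by
      rw [mul_smul, (exists_smul_singleton g k).choose_spec]
      exact (exists_smul_singleton f _).choose_spec

theorem smul_singleton (f : AutT d) (k : Fin d) : f • [k] = [f • k] :=
  (exists_smul_singleton f k).choose_spec

noncomputable def secFun (f : AutT d) (k : Fin d) (w : Vert d) : Vert d := (f • (k :: w)).tail

theorem smul_cons_eq_secFun (f : AutT d) (k : Fin d) (w : Vert d) :
    f • (k :: w) = (f • k) :: secFun f k w := by
  obtain ⟨w', hw'⟩ := f.2.1.exists_append_eq [k] w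
  change f • (k :: w) = f • [k] ++ w' at hw'
  rw [secFun, hw', smul_singleton]
  rfl

theorem secFun_mul (f g : AutT d) (k : Fin d) (w : Vert d) :
    secFun (f * g) k w = secFun f (g • k) (secFun g k w) := by
  have h := smul_cons_eq_secFun (f * g) k w
  rw [mul_smul, smul_cons_eq_secFun g, smul_cons_eq_secFun f, ← mul_smul] at h
  exact (List.cons.inj h).2.symm

theorem secFun_append (f : AutT d) (k : Fin d) (v : Vert d) (i : Fin d) :
    ∃ j, secFun f k (v ++ [i]) = secFun f k v ++ [j] := by
  obtain ⟨j, hj⟩ := f.2.1 (k :: v) i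
  change f • (k :: (v ++ [i])) = f • (k :: v) ++ [j] at hj
  exact ⟨j, by rw [secFun, hj, smul_cons_eq_secFun]; rfl⟩

/-- The section `f|ₖ` of `f` at the first-level vertex `k`. -/
noncomputable def sec (f : AutT d) (k : Fin d) : AutT d :=
  ⟨{ toFun := secFun f k
     invFun := secFun f⁻¹ (f • k)
     left_inv := fun w => by rw [← secFun_mul, inv_mul_cancel]; rfl
     right_inv := fun w => by
       have h := secFun_mul f f⁻¹ (f • k) w
       rw [mul_inv_cancel, inv_smul_smul] at h
       exact h.symm },
    secFun_append f k, secFun_append f⁻¹ (f • k)⟩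

theorem smul_cons (f : AutT d) (k : Fin d) (w : Vert d) :
    f • (k :: w) = (f • k) :: (sec f k • w) :=
  smul_cons_eq_secFun f k w

theorem smul_cons_eq_iff {f : AutT d} {k j : Fin d} {w w' : Vert d} :
    f • (k :: w) = j :: w' ↔ f • k = j ∧ sec f k • w = w' := by
  rw [smul_cons, List.cons.injEq]

theorem sec_mul (f g : AutT d) (k : Fin d) : sec (f * g) k = sec f (g • k) * sec g k :=
  ext (secFun_mul f g k)

theorem sec_one (k : Fin d) : sec (1 : AutT d) k = 1 := ext fun _ => rfl

theorem sec_inv (f : AutT d) (k : Fin d) : sec f⁻¹ k = (sec f (f⁻¹ • k))⁻¹ :=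
  eq_inv_of_mul_eq_one_right <| by rw [← sec_mul, mul_inv_cancel, sec_one]

theorem mem_lvlStab_one_iff {f : AutT d} : f ∈ lvlStab d 1 ↔ ∀ k : Fin d, f • k = k := by
  refine ⟨fun hf k => List.singleton_injective ((smul_singleton f k).symm.trans (hf [k] rfl)),
    fun hf v hv => ?_⟩
  obtain ⟨k, rfl⟩ := List.length_eq_one_iff.mp hv
  change f • [k] = [k]
  rw [smul_singleton, hf]

theorem smul_cons_of_mem_rigid {f : AutT d} {x k : Fin d} (hf : f ∈ rigid d [x]) (hk : k ≠ x)
    (w : Vert d) : f • (k :: w) = k :: w :=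
  hf (k :: w) fun h => hk (List.cons_prefix_cons.mp h).1.symm

theorem mem_lvlStab_one_of_mem_rigid {f : AutT d} {x : Fin d} (hf : f ∈ rigid d [x]) :
    f ∈ lvlStab d 1 := by
  have hfix : ∀ k, k ≠ x → f • k = k := fun k hk =>
    (smul_cons_eq_iff.mp (smul_cons_of_mem_rigid hf hk [])).1
  refine mem_lvlStab_one_iff.mpr fun k => ?_
  by_cases hk : k = x
  · subst hk
    by_contra h
    -- otherwise `f • k ≠ k` would be fixed by `f`
    exact h (smul_left_cancel f (hfix _ h))
  · exact hfix k hk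

theorem sec_eq_one_of_mem_rigid {f : AutT d} {x k : Fin d} (hf : f ∈ rigid d [x]) (hk : k ≠ x) :
    sec f k = 1 :=
  ext fun w => (smul_cons_eq_iff.mp (smul_cons_of_mem_rigid hf hk w)).2

theorem pow_smul_cons_of_smul_eq {f : AutT d} {k : Fin d} (hk : f • k = k) (n : ℕ) (w : Vert d) :
    f ^ n • (k :: w) = k :: (sec f k ^ n • w) := by
  induction n generalizing w with
  | zero => rfl
  | succ n ih => rw [pow_succ, mul_smul, smul_cons, hk, ih, pow_succ, mul_smul]

theorem sec_conj_of_sec_eq_one {f : AutT d} (hf : ∀ k, sec f k = 1) (g : AutT d) (k : Fin d) :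
    sec (f * g * f⁻¹) k = sec g (f⁻¹ • k) := by
  simp [sec_mul, sec_inv, hf]

end AutT

open AutT Subgroup Fin.NatCast

section GGS

variable {p : ℕ} [NeZero p]

theorem aut_a_pow_smul_cons (n : ℕ) (k : Fin p) (w : Vert p) :
    aut_a p ^ n • (k :: w) = (k + n) :: w := by
  induction n generalizing k with
  | zero => simp
  | succ n ih =>
    rw [pow_succ, mul_smul]
    change aut_a p ^ n • ((k + 1) :: w) = _
    rw [ih]
    push_cast
    rw [add_assoc, add_comm 1]

theorem aut_a_pow_smul (n : ℕ) (k : Fin p) : aut_a p ^ n • k = k + n :=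
  (smul_cons_eq_iff.mp (aut_a_pow_smul_cons n k [])).1

theorem sec_aut_a_pow (n : ℕ) (k : Fin p) : sec (aut_a p ^ n) k = 1 :=
  ext fun w => (smul_cons_eq_iff.mp (aut_a_pow_smul_cons n k w)).2

theorem aut_a_smul (k : Fin p) : aut_a p • k = k + 1 := by
  simpa using aut_a_pow_smul 1 k

theorem sec_aut_a (k : Fin p) : sec (aut_a p) k = 1 := by
  simpa using sec_aut_a_pow 1 k

theorem aut_a_pow_p : aut_a p ^ p = 1 := by
  refine ext fun w => ?_
  cases w with
  | nil => exact smul_nil _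
  | cons k w => rw [aut_a_pow_smul_cons, Fin.natCast_self, add_zero, one_smul]

theorem aut_b_smul_cons (k : Fin p) (w : Vert p) :
    aut_b p • (k :: w) = k :: ((if k = -1 then aut_b p else aut_a p) • w) := by
  change gB p (k :: w) = _
  by_cases h : k = -1
  · rw [gB, if_pos ((Fin.val_eq_sub_one_iff_eq_neg_one k).mpr h), if_pos h]; rfl
  · rw [gB, if_neg (mt (Fin.val_eq_sub_one_iff_eq_neg_one k).mp h), if_neg h]; rfl

theorem aut_b_smul (k : Fin p) : aut_b p • k = k :=
  (smul_cons_eq_iff.mp (aut_b_smul_cons k [])).1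

theorem sec_aut_b (k : Fin p) : sec (aut_b p) k = if k = -1 then aut_b p else aut_a p :=
  ext fun w => (smul_cons_eq_iff.mp (aut_b_smul_cons k w)).2

theorem aut_b_pow_p : aut_b p ^ p = 1 := by
  refine ext fun w => ?_
  induction w with
  | nil => exact smul_nil _
  | cons k w ih =>
    rw [pow_smul_cons_of_smul_eq (aut_b_smul k), sec_aut_b]
    split_ifs
    · rw [ih]; rfl
    · rw [aut_a_pow_p]; rfl

theorem aut_a_mem_GGS : aut_a p ∈ GGS p := subset_closure (Set.mem_insert _ _)

theorem aut_b_mem_GGS : aut_b p ∈ GGS p := subset_closure (Set.mem_insert_of_mem _ rfl)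

def bConj (j : Fin p) : AutT p := aut_a p ^ (j : ℕ) * aut_b p * (aut_a p ^ (j : ℕ))⁻¹

theorem bConj_zero : bConj (0 : Fin p) = aut_b p := by simp [bConj]

theorem bConj_mem_GGS (j : Fin p) : bConj j ∈ GGS p :=
  mul_mem (mul_mem (pow_mem aut_a_mem_GGS _) aut_b_mem_GGS) (inv_mem (pow_mem aut_a_mem_GGS _))

theorem bConj_smul (j k : Fin p) : bConj j • k = k := by
  rw [bConj, mul_smul, mul_smul, aut_b_smul, smul_inv_smul]

theorem bConj_mem_lvlStab (j : Fin p) : bConj j ∈ lvlStab p 1 :=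
  mem_lvlStab_one_iff.mpr (bConj_smul j)

theorem sec_bConj (j k : Fin p) : sec (bConj j) k = if j = k + 1 then aut_b p else aut_a p := by
  have hinv : (aut_a p ^ (j : ℕ))⁻¹ • k = k - j :=
    inv_smul_eq_iff.mpr (by rw [aut_a_pow_smul, Fin.cast_val_eq_self, sub_add_cancel])
  rw [bConj, sec_conj_of_sec_eq_one (sec_aut_a_pow _), hinv, sec_aut_b]
  congr 1
  exact propext ⟨fun h => by rw [sub_eq_iff_eq_add] at h; rw [h]; abel, fun h => by rw [h]; abel⟩

theorem bConj_pow_p (j : Fin p) : bConj j ^ p = 1 := by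
  rw [bConj, conj_pow, aut_b_pow_p, mul_one, mul_inv_cancel]

theorem aut_a_pow_val (n : ℕ) : aut_a p ^ ((n : Fin p) : ℕ) = aut_a p ^ n := by
  rw [Fin.val_natCast, ← pow_eq_pow_mod n aut_a_pow_p]

theorem aut_a_mul_bConj (j : Fin p) : aut_a p * bConj j * (aut_a p)⁻¹ = bConj (j + 1) := by
  have h : ((j + 1 : Fin p) : ℕ) = (((j : ℕ) + 1 : ℕ) : Fin p) := by simp
  rw [bConj, bConj, h, aut_a_pow_val, pow_succ']
  group

theorem smul_eq_add_of_mem_GGS {g : AutT p} (hg : g ∈ GGS p) (k : Fin p) :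
    g • k = k + g • 0 := by
  induction hg using closure_induction generalizing k with
  | mem x hx =>
    rcases hx with rfl | rfl
    · rw [aut_a_smul, aut_a_smul, zero_add]
    · rw [aut_b_smul, aut_b_smul, add_zero]
  | one => rw [one_smul, one_smul, add_zero]
  | mul x y _ _ hx hy => rw [mul_smul, mul_smul, hy, hx, hx (y • 0), add_assoc]
  | inv x _ hx =>
    have h (m : Fin p) : x⁻¹ • m = m - x • 0 :=
      inv_smul_eq_iff.mpr (by rw [hx, sub_add_cancel])
    rw [h, h, zero_sub, sub_eq_add_neg]

theorem sec_mem_GGS {g : AutT p} (hg : g ∈ GGS p) (k : Fin p) : sec g k ∈ GGS p := by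
  induction hg using closure_induction generalizing k with
  | mem x hx =>
    rcases hx with rfl | rfl
    · rw [sec_aut_a]; exact one_mem _
    · rw [sec_aut_b]; split_ifs
      exacts [aut_b_mem_GGS, aut_a_mem_GGS]
  | one => rw [sec_one]; exact one_mem _
  | mul x y _ _ hx hy => rw [sec_mul]; exact mul_mem (hx _) (hy _)
  | inv x _ hx => rw [sec_inv]; exact inv_mem (hx _)

theorem aut_a_mem_normalizer :
    aut_a p ∈ normalizer (Subgroup.closure (Set.range (bConj (p := p))) : Set (AutT p)) := by
  rw [mem_normalizer_iff_map_conj_eq, MonoidHom.map_closure, ← Set.range_comp]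
  have h : ⇑(MulAut.conj (aut_a p) : AutT p →* AutT p) ∘ bConj = bConj ∘ (Equiv.addRight 1) :=
    funext aut_a_mul_bConj
  rw [h, (Equiv.addRight 1).surjective.range_comp]

theorem GGS_le_closure_bConj_sup :
    GGS p ≤ Subgroup.closure (Set.range bConj) ⊔ zpowers (aut_a p) := by
  rw [GGS, closure_le]
  rintro g (rfl | rfl)
  · exact mem_sup_right (mem_zpowers _)
  · exact mem_sup_left (subset_closure ⟨0, bConj_zero⟩)

theorem aut_a_zpow_eq_one_of_mem_lvlStab {k : ℤ} (h : aut_a p ^ k ∈ lvlStab p 1) :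
    aut_a p ^ k = 1 := by
  have hfin : IsOfFinOrder (aut_a p) :=
    isOfFinOrder_iff_pow_eq_one.mpr ⟨p, Nat.pos_of_neZero p, aut_a_pow_p⟩
  obtain ⟨n, hn : aut_a p ^ n = aut_a p ^ k⟩ :=
    hfin.mem_powers_iff_mem_zpowers.mpr (zpow_mem_zpowers _ k)
  rw [← hn] at h ⊢
  have h0 := mem_lvlStab_one_iff.mp h 0
  rw [aut_a_pow_smul, zero_add, Fin.natCast_eq_zero] at h0
  obtain ⟨m, rfl⟩ := h0
  rw [pow_mul, aut_a_pow_p, one_pow]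

theorem GGS_inf_lvlStab_eq_closure :
    GGS p ⊓ lvlStab p 1 = Subgroup.closure (Set.range bConj) := by
  refine le_antisymm ?_ ((Subgroup.closure_le _).mpr ?_)
  · rintro g ⟨hgG, hgSt⟩
    obtain ⟨n, hn, k, rfl⟩ :=
      exists_mul_zpow_eq_of_mem_sup aut_a_mem_normalizer (GGS_le_closure_bConj_sup hgG)
    have hnSt : n ∈ lvlStab p 1 :=
      Subgroup.closure_le (lvlStab p 1) |>.mpr (Set.range_subset_iff.mpr bConj_mem_lvlStab) hn
    have hk : aut_a p ^ k ∈ lvlStab p 1 := by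
      simpa using mul_mem (inv_mem hnSt) hgSt
    rwa [aut_a_zpow_eq_one_of_mem_lvlStab hk, mul_one]
  · rintro _ ⟨j, rfl⟩
    exact ⟨bConj_mem_GGS j, bConj_mem_lvlStab j⟩

def bConjStab (j : Fin p) : ↥(GGS p ⊓ lvlStab p 1) :=
  ⟨bConj j, bConj_mem_GGS j, bConj_mem_lvlStab j⟩

theorem closure_range_bConjStab : Subgroup.closure (Set.range (bConjStab (p := p))) = ⊤ := by
  apply Subgroup.map_injective (GGS p ⊓ lvlStab p 1).subtype_injective
  rw [MonoidHom.map_closure, ← Set.range_comp, ← MonoidHom.range_eq_map, range_subtype]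
  exact GGS_inf_lvlStab_eq_closure.symm

/-- The exponent of `a` (mod `p`) in an element of `G`, read off from its action on level one. -/
noncomputable def aExp (g : AutT p) : ZMod p := ZMod.finEquiv p (g • 0)

/-- The exponent of `b` (mod `p`) in an element of `G`: `b` has `p - 1 = -1` sections equal
to `a`. -/
noncomputable def bExp (g : AutT p) : ZMod p := -∑ k, aExp (sec g k)

theorem aExp_mul {f : AutT p} (hf : f ∈ GGS p) (g : AutT p) : aExp (f * g) = aExp f + aExp g := by
  rw [aExp, aExp, aExp, mul_smul, smul_eq_add_of_mem_GGS hf, map_add, add_comm]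

theorem bExp_mul {f : AutT p} (hf : f ∈ GGS p) (g : AutT p) : bExp (f * g) = bExp f + bExp g := by
  simp only [bExp, sec_mul, aExp_mul (sec_mem_GGS hf _), Finset.sum_add_distrib, neg_add]
  congr 2
  exact Equiv.sum_comp (MulAction.toPerm g) fun k => aExp (sec f k)

theorem aExp_one : aExp (1 : AutT p) = 0 := by simp [aExp]

theorem bExp_one : bExp (1 : AutT p) = 0 := by simp [bExp, sec_one, aExp_one]

theorem aExp_aut_a : aExp (aut_a p) = 1 := by
  rw [aExp, aut_a_smul, zero_add, map_one]

theorem aExp_aut_b : aExp (aut_b p) = 0 := by simp [aExp, aut_b_smul]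

theorem bExp_aut_a : bExp (aut_a p) = 0 := by simp [bExp, sec_aut_a, aExp_one]

theorem bExp_aut_b : bExp (aut_b p) = 1 := by
  have h (k : Fin p) : aExp (sec (aut_b p) k) = 1 - if k = -1 then 1 else 0 := by
    rw [sec_aut_b]; split_ifs <;> simp [aExp_aut_a, aExp_aut_b]
  simp [bExp, h, Finset.sum_sub_distrib]

theorem aExp_sec_bConj (j k : Fin p) :
    aExp (sec (bConj j) k) = if j = k + 1 then 0 else 1 := by
  rw [sec_bConj]; split_ifs <;> simp [aExp_aut_a, aExp_aut_b]

theorem bExp_sec_bConj (j k : Fin p) :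
    bExp (sec (bConj j) k) = if j = k + 1 then 1 else 0 := by
  rw [sec_bConj]; split_ifs <;> simp [bExp_aut_a, bExp_aut_b]

noncomputable def secChar (F : AutT p → ZMod p) (hF : ∀ f ∈ GGS p, ∀ g, F (f * g) = F f + F g)
    (k : Fin p) : ↥(GGS p ⊓ lvlStab p 1) →* Multiplicative (ZMod p) :=
  MonoidHom.mk' (fun g => .ofAdd (F (sec g k))) fun f g => by
    rw [coe_mul, sec_mul, mem_lvlStab_one_iff.mp g.2.2, hF _ (sec_mem_GGS f.2.1 k)]
    rfl

theorem apply_sec_eq_sum (F : AutT p → ZMod p) (hF : ∀ f ∈ GGS p, ∀ g, F (f * g) = F f + F g)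
    (k : Fin p) {g : AutT p} (hg : g ∈ GGS p ⊓ lvlStab p 1) {i : Fin p → ℤ}
    (hi : Abelianization.of ⟨g, hg⟩ = ∏ j, Abelianization.of (bConjStab j) ^ i j) :
    F (sec g k) = ∑ j, (i j : ZMod p) * F (sec (bConj j) k) := by
  have h := congrArg (fun x => (Abelianization.lift (secChar F hF k) x).toAdd) hi
  simp only [Abelianization.lift_apply_of, map_prod, map_zpow, toAdd_prod, toAdd_zpow,
    zsmul_eq_mul] at h
  exact h

theorem intCast_exponent_eq_zero_of_mem_rigid (hp : 1 < p) {x : Fin p} {g : AutT p}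
    (hgR : g ∈ rigid p [x]) (hg : g ∈ GGS p ⊓ lvlStab p 1) {i : Fin p → ℤ}
    (hi : Abelianization.of ⟨g, hg⟩ = ∏ j, Abelianization.of (bConjStab j) ^ i j) (j : Fin p) :
    (i j : ZMod p) = 0 := by
  have hne (y : Fin p) : y + 1 ≠ y := fun h => hp.ne' (Fin.one_eq_zero_iff.mp (add_eq_left.mp h))
  -- the `b`-exponent of `g|ₖ` is `i (k + 1)`, and `g|ₖ = 1` for `k ≠ x`
  have hb (j : Fin p) (hj : j ≠ x + 1) : (i j : ZMod p) = 0 := by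
    have h := apply_sec_eq_sum bExp (fun _ hf => bExp_mul hf) (j - 1) hg hi
    rw [sec_eq_one_of_mem_rigid hgR fun h => hj (by rw [← h, sub_add_cancel])] at h
    simpa [bExp_one, bExp_sec_bConj] using h.symm
  by_cases hj : j = x + 1
  · -- the `a`-exponent of `g|ₓ₊₁ = 1` is then `i (x + 1)`
    have h := apply_sec_eq_sum aExp (fun _ hf => aExp_mul hf) (x + 1) hg hi
    rw [sec_eq_one_of_mem_rigid hgR (hne x), aExp_one,
      Finset.sum_eq_single (x + 1) (fun l _ hl => by rw [hb l hl, zero_mul]) (by simp),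
      aExp_sec_bConj, if_neg (hne (x + 1)).symm, mul_one] at h
    rw [hj, h]
  · exact hb j hj

theorem ristV_le_commutator (hp : 1 < p) (x : Fin p) :
    ristV (GGS p) [x] ≤ ⁅GGS p ⊓ lvlStab p 1, GGS p ⊓ lvlStab p 1⁆ := by
  rintro g ⟨hgG, hgR⟩
  have hg : g ∈ GGS p ⊓ lvlStab p 1 := ⟨hgG, mem_lvlStab_one_of_mem_rigid hgR⟩
  obtain ⟨i, hi⟩ := Abelianization.exists_of_eq_prod_zpow closure_range_bConjStab ⟨g, hg⟩
  have hfactor (j : Fin p) : Abelianization.of (bConjStab j) ^ i j = 1 := by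
    obtain ⟨m, hm⟩ := (ZMod.intCast_zmod_eq_zero_iff_dvd _ _).mp
      (intCast_exponent_eq_zero_of_mem_rigid hp hgR hg hi j)
    have hpow : bConjStab j ^ p = 1 := Subtype.ext (bConj_pow_p j)
    rw [hm, zpow_mul, zpow_natCast, ← map_pow, hpow, map_one, one_zpow]
  rw [← map_subtype_commutator, ← Abelianization.ker_of]
  refine ⟨⟨g, hg⟩, MonoidHom.mem_ker.mpr ?_, rfl⟩
  rw [hi]
  exact Finset.prod_eq_one fun j _ => hfactor j

theorem GGS_le_normalizer_GGSK : GGS p ≤ normalizer (GGSK p : Set (AutT p)) := by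
  rw [GGSK, le_normalizer_closure_iff]
  rintro h hh _ ⟨g, hg, rfl⟩
  exact subset_closure ⟨h * g, mul_mem hh hg, by group⟩

theorem GGS_le_GGSK_sup : GGS p ≤ GGSK p ⊔ zpowers (aut_a p) := by
  rw [GGS, closure_le]
  rintro g (rfl | rfl)
  · exact mem_sup_right (mem_zpowers _)
  · have h : aut_b p * (aut_a p)⁻¹ ∈ GGSK p := subset_closure ⟨1, one_mem _, by group⟩
    simpa using mul_mem (mem_sup_left h) (mem_sup_right (mem_zpowers (aut_a p)))

theorem commutator_GGS_le_GGSK : ⁅GGS p, GGS p⁆ ≤ GGSK p :=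
  (commutator_mono GGS_le_GGSK_sup GGS_le_GGSK_sup).trans
    (Subgroup.commutator_sup_zpowers_le (GGS_le_normalizer_GGSK aut_a_mem_GGS))

theorem ristL_one_le_GGSK (hp : 1 < p) : ristL (GGS p) 1 ≤ GGSK p := by
  refine iSup₂_le fun u hu => ?_
  obtain ⟨x, rfl⟩ := List.length_eq_one_iff.mp hu
  exact (ristV_le_commutator hp x).trans
    ((commutator_mono inf_le_left inf_le_left).trans commutator_GGS_le_GGSK)

end GGS

theorem stmt_11_general (p : ℕ) [NeZero p] (hp : p.Prime) :
    (∀ x : Fin p, ristV (GGS p) [x] ≤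
      ⁅GGS p ⊓ lvlStab p 1, GGS p ⊓ lvlStab p 1⁆) ∧
    ristL (GGS p) 1 ≤ GGSK p :=
  ⟨ristV_le_commutator hp.one_lt, ristL_one_le_GGSK hp.one_lt⟩

/-- for the GGS-group `G` with constant defining vector (`p` an odd
prime), the rigid stabilizer of every first-level vertex is contained in the derived
subgroup of the first-level stabilizer `st_G(1)`, and consequently
`rst_G(1) ≤ K = ⟨ba⁻¹⟩^G`. -/
theorem stmt_11 (p : ℕ) [NeZero p] (hp : p.Prime) (hodd : Odd p) :
    (∀ x : Fin p, ristV (GGS p) [x] ≤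
      ⁅GGS p ⊓ lvlStab p 1, GGS p ⊓ lvlStab p 1⁆) ∧
    ristL (GGS p) 1 ≤ GGSK p :=
  stmt_11_general p hp
end

section
/- For the Basilica group G, the second derived subgroup satisfies ψ(G'') = γ₃(G) × γ₃(G), where γ₃(G) is the third term of the lower central series. -/
section Basilica

/-- The two generators of the Basilica group, defined by mutual recursion:
`bas false` is the action of `a = (1, b)` and `bas true` is the action of
`b = (1, a)ε` on the binary tree. -/
def bas : Bool → List (Fin 2) → List (Fin 2)
  | _, [] => []
  | false, x :: w => if x = 0 then 0 :: w else 1 :: bas true w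
  | true, x :: w => if x = 0 then 1 :: w else 0 :: bas false w

/-- The inverses of the two generators of the Basilica group. -/
def basI : Bool → List (Fin 2) → List (Fin 2)
  | _, [] => []
  | false, x :: w => if x = 0 then 0 :: w else 1 :: basI true w
  | true, x :: w => if x = 0 then 1 :: basI false w else 0 :: w

theorem fin2_eq_one {x : Fin 2} (h : ¬ x = 0) : x = 1 := by omega

theorem basI_bas : ∀ (fl : Bool) (l : List (Fin 2)), basI fl (bas fl l) = l
  | false, [] => rfl
  | true, [] => rfl
  | false, x :: w => by
    by_cases h : x = 0
    · simp [bas, basI, h]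
    · simp [bas, basI, h, fin2_eq_one h, basI_bas true w]
  | true, x :: w => by
    by_cases h : x = 0
    · simp [bas, basI, h]
    · simp [bas, basI, h, fin2_eq_one h, basI_bas false w]

theorem bas_basI : ∀ (fl : Bool) (l : List (Fin 2)), bas fl (basI fl l) = l
  | false, [] => rfl
  | true, [] => rfl
  | false, x :: w => by
    by_cases h : x = 0
    · simp [bas, basI, h]
    · simp [bas, basI, h, fin2_eq_one h, bas_basI true w]
  | true, x :: w => by
    by_cases h : x = 0
    · simp [bas, basI, h, bas_basI false w]
    · simp [bas, basI, h, fin2_eq_one h]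

/-- The generators of the Basilica group as permutations of the vertex set. -/
def basPerm (fl : Bool) : Equiv.Perm (Vert 2) :=
  ⟨bas fl, basI fl, basI_bas fl, bas_basI fl⟩

theorem bas_append : ∀ (fl : Bool) (v : Vert 2) (i : Fin 2),
    ∃ j, bas fl (v ++ [i]) = bas fl v ++ [j]
  | false, [], i => by
    by_cases h : i = 0
    · exact ⟨i, by simp [bas, h]⟩
    · exact ⟨i, by simp [bas, h, fin2_eq_one h]⟩
  | true, [], i => by
    by_cases h : i = 0
    · exact ⟨1, by simp [bas, h]⟩
    · exact ⟨0, by simp [bas, h, fin2_eq_one h]⟩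
  | false, x :: w, i => by
    by_cases h : x = 0
    · exact ⟨i, by simp [bas, h]⟩
    · obtain ⟨j, hj⟩ := bas_append true w i
      exact ⟨j, by simp [bas, h, fin2_eq_one h, hj]⟩
  | true, x :: w, i => by
    by_cases h : x = 0
    · exact ⟨i, by simp [bas, h]⟩
    · obtain ⟨j, hj⟩ := bas_append false w i
      exact ⟨j, by simp [bas, h, fin2_eq_one h, hj]⟩

theorem basI_append : ∀ (fl : Bool) (v : Vert 2) (i : Fin 2),
    ∃ j, basI fl (v ++ [i]) = basI fl v ++ [j]
  | false, [], i => by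
    by_cases h : i = 0
    · exact ⟨i, by simp [basI, h]⟩
    · exact ⟨i, by simp [basI, h, fin2_eq_one h]⟩
  | true, [], i => by
    by_cases h : i = 0
    · exact ⟨1, by simp [basI, h]⟩
    · exact ⟨0, by simp [basI, h, fin2_eq_one h]⟩
  | false, x :: w, i => by
    by_cases h : x = 0
    · exact ⟨i, by simp [basI, h]⟩
    · obtain ⟨j, hj⟩ := basI_append true w i
      exact ⟨j, by simp [basI, h, fin2_eq_one h, hj]⟩
  | true, x :: w, i => by
    by_cases h : x = 0
    · obtain ⟨j, hj⟩ := basI_append false w i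
      exact ⟨j, by simp [basI, h, hj]⟩
    · exact ⟨i, by simp [basI, h, fin2_eq_one h]⟩

/-- The generator `a = (1, b)` of the Basilica group, as a tree automorphism. -/
def bas_a : AutT 2 := ⟨basPerm false, bas_append false, basI_append false⟩

/-- The generator `b = (1, a)ε` of the Basilica group, as a tree automorphism. -/
def bas_b : AutT 2 := ⟨basPerm true, bas_append true, basI_append true⟩

/-- The Basilica group `G = ⟨a, b⟩`. -/
def Basilica : Subgroup (AutT 2) :=
  Subgroup.closure {bas_a, bas_b}

/-- The normal closure `⟨a⟩^G` of `a` in the Basilica group. -/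
def BasA : Subgroup (AutT 2) :=
  Subgroup.closure {x | ∃ g ∈ Basilica, x = g * bas_a * g⁻¹}

/-- The normal closure `⟨b⟩^G` of `b` in the Basilica group. -/
def BasB : Subgroup (AutT 2) :=
  Subgroup.closure {x | ∃ g ∈ Basilica, x = g * bas_b * g⁻¹}

end Basilica

/-!
Write `ψ⁻¹(x, y)` for the automorphism acting as `x` and `y` on the two subtrees of the root and
`ε` for the root swap, so that `a = ψ⁻¹(1, b)` and `b = ψ⁻¹(a, 1) ε`.

`ψ(G'') ≤ γ₃ × γ₃`: the subgroup `B = ⟨b⟩G'` lies between `G'` and `G`, so it is normalised by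
`G`; as `G ≤ ψ⁻¹(G × G) ⟨ε⟩`, also `ψ⁻¹(B × B)` is normalised by `G`. It contains
`[a, b] = ψ⁻¹(ab⁻¹a⁻¹, b)`, hence all of `G'`, and `[B, B] ≤ γ₃` because `B` is generated by `b`
and `G'`. So `ψ(G'') ≤ [B, B] × [B, B] ≤ γ₃ × γ₃`.

`γ₃ × γ₃ ≤ ψ(G'')`: `ψ⁻¹([a, b], 1) = [b², b⁻¹ab]` and `ψ⁻¹(b, b⁻¹) = [b⁻¹, a]` lie in `G'`, so
`ψ⁻¹([[a, b], b], 1) ∈ G''`. As `[[a, b], a] = 1`, `γ₃` is the normal closure of `[[a, b], b]`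
in `G`, and `{z | ψ⁻¹(z, 1) ∈ G''}` is normalised by `G` because `G` is self-replicating; this
gives `γ₃ × 1`, and conjugation by `b` carries it to `1 × γ₃`.
-/

open scoped commutatorElement

namespace Subgroup

variable {M : Type*} [Group M]

theorem le_normalizer_commutator {H K L : Subgroup M} (hK : H ≤ normalizer (K : Set M))
    (hL : H ≤ normalizer (L : Set M)) : H ≤ normalizer (⁅K, L⁆ : Subgroup M) := by
  intro g hg
  rw [mem_normalizer_iff_map_conj_eq, map_commutator, mem_normalizer_iff_map_conj_eq.mp (hK hg),
    mem_normalizer_iff_map_conj_eq.mp (hL hg)]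

theorem commutatorElement_mem_of_mem_closure {S : Set M} {T : Subgroup M}
    (hS : closure S ≤ normalizer (T : Set M)) {x : M} (hx : ∀ s ∈ S, ⁅x, s⁆ ∈ T) {y : M}
    (hy : y ∈ closure S) : ⁅x, y⁆ ∈ T := by
  induction hy using closure_induction with
  | mem s hs => exact hx s hs
  | one => simp
  | mul y z hy _ hxy hxz =>
    rw [show ⁅x, y * z⁆ = ⁅x, y⁆ * (y * ⁅x, z⁆ * y⁻¹) by group]
    exact mul_mem hxy ((mem_normalizer_iff.mp (hS hy) _).mp hxz)
  | inv y hy hxy =>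
    rw [show ⁅x, y⁻¹⁆ = y⁻¹ * ⁅x, y⁆⁻¹ * y⁻¹⁻¹ by group]
    exact (mem_normalizer_iff.mp (hS (inv_mem hy)) _).mp (inv_mem hxy)

theorem commutator_closure_le {S : Set M} {T : Subgroup M}
    (hS : closure S ≤ normalizer (T : Set M)) (h : ∀ s ∈ S, ∀ t ∈ S, ⁅s, t⁆ ∈ T) :
    ⁅closure S, closure S⁆ ≤ T :=
  commutator_le.mpr fun _ hx _ hy => commutatorElement_mem_of_mem_closure hS (fun s hs => by
    rw [← commutatorElement_inv]
    exact inv_mem (commutatorElement_mem_of_mem_closure hS (h s hs) hx)) hy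

theorem commutator_closure_pair_le {a b : M} {T : Subgroup M}
    (hT : closure {a, b} ≤ normalizer (T : Set M)) (hab : ⁅a, b⁆ ∈ T) :
    ⁅closure {a, b}, closure {a, b}⁆ ≤ T := by
  have hba : ⁅b, a⁆ ∈ T := by rw [← commutatorElement_inv]; exact inv_mem hab
  exact commutator_closure_le hT (by simp [hab, hba])

/-- For normal `T`, the preimage of the centralizer of the image of `H` in `M ⧸ T`. -/
def centralizerMod (H T : Subgroup M) : Subgroup M where
  carrier := {x | x ∈ normalizer (T : Set M) ∧ ∀ y ∈ H, ⁅x, y⁆ ∈ T}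
  one_mem' := ⟨one_mem _, fun _ _ => by simp⟩
  mul_mem' := fun {x z} ⟨hxN, hx⟩ ⟨hzN, hz⟩ => ⟨mul_mem hxN hzN, fun y hy => by
    rw [show ⁅x * z, y⁆ = x * ⁅z, y⁆ * x⁻¹ * ⁅x, y⁆ by group]
    exact mul_mem ((mem_normalizer_iff.mp hxN _).mp (hz y hy)) (hx y hy)⟩
  inv_mem' := fun {x} ⟨hxN, hx⟩ => ⟨inv_mem hxN, fun y hy => by
    rw [show ⁅x⁻¹, y⁆ = x⁻¹ * ⁅x, y⁆⁻¹ * x⁻¹⁻¹ by group]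
    exact (mem_normalizer_iff.mp (inv_mem hxN) _).mp (inv_mem (hx y hy))⟩

theorem le_normalizer_centralizerMod {H T : Subgroup M} (hH : H ≤ normalizer (T : Set M)) :
    H ≤ normalizer (centralizerMod H T : Set M) :=
  le_normalizer_iff.mpr fun g hg x ⟨hxN, hx⟩ =>
    ⟨mul_mem (mul_mem (hH hg) hxN) (inv_mem (hH hg)), fun y hy => by
      rw [show ⁅g * x * g⁻¹, y⁆ = g * ⁅x, g⁻¹ * y * g⁆ * g⁻¹ by group]
      exact (mem_normalizer_iff.mp (hH hg) _).mp (hx _ (mul_mem (mul_mem (inv_mem hg) hy) hg))⟩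

theorem commutator_commutator_closure_pair_le {a b : M} {T : Subgroup M}
    (hT : closure {a, b} ≤ normalizer (T : Set M)) (ha : ⁅⁅a, b⁆, a⁆ ∈ T)
    (hb : ⁅⁅a, b⁆, b⁆ ∈ T) :
    ⁅⁅closure {a, b}, closure {a, b}⁆, closure {a, b}⁆ ≤ T := by
  -- `⁅a, b⁆` commutes with `closure {a, b}` modulo `T`, hence so does its normal closure.
  have hab : ⁅a, b⁆ ∈ centralizerMod (closure {a, b}) T := by
    refine ⟨?_, fun y hy => commutatorElement_mem_of_mem_closure hT (by simp [ha, hb]) hy⟩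
    exact commutator_le_self _ (commutator_mem_commutator (hT (subset_closure (by simp)))
      (hT (subset_closure (by simp))))
  have hG' := commutator_closure_pair_le (le_normalizer_centralizerMod hT) hab
  exact commutator_le.mpr fun x hx y hy => (hG' hx).2 y hy

end Subgroup

namespace AutT

variable {d : ℕ}

theorem apply_nil (f : AutT d) : (f : Equiv.Perm (Vert d)) [] = [] := by
  rcases List.eq_nil_or_concat ((f : Equiv.Perm (Vert d)) []) with h | ⟨v, i, h⟩
  · exact h
  · obtain ⟨j, hj⟩ := f.2.2 v i
    have h' := (f : Equiv.Perm (Vert d)).symm_apply_apply []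
    rw [h, List.concat_eq_append, hj] at h'
    simp at h'

theorem ext_cons {f g : AutT d}
    (h : ∀ i w, (f : Equiv.Perm (Vert d)) (i :: w) = (g : Equiv.Perm (Vert d)) (i :: w)) :
    f = g := by
  refine Subtype.ext (Equiv.ext ?_)
  rintro (_ | ⟨i, w⟩)
  · rw [apply_nil, apply_nil]
  · exact h i w

def ofRootFun (π : Equiv.Perm (Fin d)) (g : Fin d → Vert d → Vert d) : Vert d → Vert d
  | [] => []
  | i :: w => π i :: g i w

def ofRootPerm (π : Equiv.Perm (Fin d)) (g : Fin d → Equiv.Perm (Vert d)) :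
    Equiv.Perm (Vert d) where
  toFun := ofRootFun π fun i => g i
  invFun := ofRootFun π⁻¹ fun i => (g (π⁻¹ i)).symm
  left_inv := by rintro (_ | ⟨i, w⟩) <;> simp [ofRootFun]
  right_inv := by rintro (_ | ⟨i, w⟩) <;> simp [ofRootFun]

theorem mapsChildren_ofRootPerm (π : Equiv.Perm (Fin d)) (g : Fin d → Equiv.Perm (Vert d))
    (hg : ∀ i, MapsChildren (g i)) (hnil : ∀ i, g i [] = []) :
    MapsChildren (ofRootPerm π g) := by
  rintro (_ | ⟨i, w⟩) j
  · exact ⟨π j, by simp [ofRootPerm, ofRootFun, hnil]⟩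
  · obtain ⟨k, hk⟩ := hg i w j
    exact ⟨k, by simp [ofRootPerm, ofRootFun, hk]⟩

/-- The inverse of the wreath recursion `Aut T → Aut T ≀ Sym d`. -/
def ofRoot (π : Equiv.Perm (Fin d)) (g : Fin d → AutT d) : AutT d :=
  ⟨ofRootPerm π fun i => g i,
    mapsChildren_ofRootPerm _ _ (fun i => (g i).2.1) fun i => apply_nil (g i),
    mapsChildren_ofRootPerm π⁻¹ (fun i => (g (π⁻¹ i) : Equiv.Perm (Vert d)).symm)
      (fun i => (g (π⁻¹ i)).2.2) fun i => apply_nil (g (π⁻¹ i))⁻¹⟩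

theorem ext_zero_one {f g : AutT 2}
    (h₀ : ∀ w, (f : Equiv.Perm (Vert 2)) (0 :: w) = (g : Equiv.Perm (Vert 2)) (0 :: w))
    (h₁ : ∀ w, (f : Equiv.Perm (Vert 2)) (1 :: w) = (g : Equiv.Perm (Vert 2)) (1 :: w)) :
    f = g :=
  ext_cons fun i => by fin_cases i; exacts [h₀, h₁]

end AutT

open AutT

/-- The paper's `ψ⁻¹` on the first level stabiliser. -/
def psiInv : AutT 2 × AutT 2 →* AutT 2 where
  toFun p := ofRoot 1 ![p.1, p.2]
  map_one' := ext_cons fun i _ => by fin_cases i <;> rfl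
  map_mul' _ _ := ext_cons fun i _ => by fin_cases i <;> rfl

def rootSwap : AutT 2 := ofRoot (Equiv.swap 0 1) 1

theorem rootSwap_inv : rootSwap⁻¹ = rootSwap :=
  inv_eq_of_mul_eq_one_right (ext_zero_one (fun _ => rfl) fun _ => rfl)

theorem rootSwap_conj_psiInv (p : AutT 2 × AutT 2) :
    rootSwap * psiInv p * rootSwap⁻¹ = psiInv p.swap := by
  rw [rootSwap_inv]
  exact ext_zero_one (fun _ => rfl) fun _ => rfl

theorem bas_a_eq : bas_a = psiInv (1, bas_b) :=
  ext_zero_one (fun _ => rfl) fun _ => rfl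

theorem bas_b_eq : bas_b = psiInv (bas_a, 1) * rootSwap :=
  ext_zero_one (fun _ => rfl) fun _ => rfl

open Subgroup

theorem map_psiInv_prod_le_normalizer {H N : Subgroup (AutT 2)}
    (h : H ≤ normalizer (N : Set (AutT 2))) :
    (H.prod H).map psiInv ≤ normalizer ((N.prod N).map psiInv : Set (AutT 2)) := by
  refine le_normalizer_iff.mpr ?_
  rintro _ ⟨⟨x, y⟩, ⟨hx, hy⟩, rfl⟩ _ ⟨⟨u, v⟩, ⟨hu, hv⟩, rfl⟩
  rw [← map_inv, ← map_mul, ← map_mul]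
  exact mem_map_of_mem _
    ⟨(mem_normalizer_iff.mp (h hx) u).mp hu, (mem_normalizer_iff.mp (h hy) v).mp hv⟩

theorem rootSwap_mem_normalizer (N : Subgroup (AutT 2)) :
    rootSwap ∈ normalizer ((N.prod N).map psiInv : Set (AutT 2)) := by
  have hswap :
      ∀ t ∈ (N.prod N).map psiInv, rootSwap * t * rootSwap⁻¹ ∈ (N.prod N).map psiInv := by
    rintro _ ⟨⟨u, v⟩, ⟨hu, hv⟩, rfl⟩
    rw [rootSwap_conj_psiInv]
    exact mem_map_of_mem _ ⟨hv, hu⟩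
  refine mem_normalizer_iff.mpr fun t => ⟨hswap t, fun ht => ?_⟩
  have h := hswap _ ht
  rw [show t = rootSwap⁻¹ * (rootSwap * t * rootSwap⁻¹) * rootSwap by group]
  simp only [rootSwap_inv] at h ⊢
  exact h

theorem mem_map_psiInv_prod_iff {H K : Subgroup (AutT 2)} {f : AutT 2} :
    f ∈ (H.prod K).map psiInv ↔ ∃ g₀ ∈ H, ∃ g₁ ∈ K, ∀ w : Vert 2,
      (f : Equiv.Perm (Vert 2)) (0 :: w) = 0 :: (g₀ : Equiv.Perm (Vert 2)) w ∧
      (f : Equiv.Perm (Vert 2)) (1 :: w) = 1 :: (g₁ : Equiv.Perm (Vert 2)) w := by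
  constructor
  · rintro ⟨⟨g₀, g₁⟩, ⟨h₀, h₁⟩, rfl⟩
    exact ⟨g₀, h₀, g₁, h₁, fun w => ⟨rfl, rfl⟩⟩
  · rintro ⟨g₀, h₀, g₁, h₁, hf⟩
    refine ⟨(g₀, g₁), ⟨h₀, h₁⟩, ext_zero_one (fun w => ?_) fun w => ?_⟩
    exacts [(hf w).1.symm, (hf w).2.symm]

theorem bas_b_mul_bas_b : bas_b * bas_b = psiInv (bas_a, bas_a) :=
  ext_zero_one (fun _ => rfl) fun _ => rfl

theorem bas_a_mul_bas_b : bas_a * bas_b = bas_b * psiInv (bas_b, 1) :=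
  ext_zero_one (fun _ => rfl) fun _ => rfl

theorem bas_b_conj_psiInv (x y : AutT 2) :
    bas_b * psiInv (x, y) * bas_b⁻¹ = psiInv (bas_a * y * bas_a⁻¹, x) := by
  calc bas_b * psiInv (x, y) * bas_b⁻¹
      = psiInv (bas_a, 1) * (rootSwap * psiInv (x, y) * rootSwap⁻¹) *
          (psiInv (bas_a, 1))⁻¹ := by
        rw [bas_b_eq]; group
    _ = psiInv (bas_a * y * bas_a⁻¹, x) := by
        rw [rootSwap_conj_psiInv, ← map_inv, ← map_mul, ← map_mul]; simp

theorem commutator_bas_a_bas_b :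
    ⁅bas_a, bas_b⁆ = psiInv (bas_a * bas_b⁻¹ * bas_a⁻¹, bas_b) := by
  calc ⁅bas_a, bas_b⁆ = bas_a * (bas_b * bas_a⁻¹ * bas_b⁻¹) := by group
    _ = psiInv (1, bas_b) * psiInv (bas_a * bas_b⁻¹ * bas_a⁻¹, 1) := by
        rw [← bas_b_conj_psiInv, bas_a_eq, ← map_inv]; simp
    _ = psiInv (bas_a * bas_b⁻¹ * bas_a⁻¹, bas_b) := by rw [← map_mul]; simp

theorem commutator_commutator_bas_a_bas_b_bas_a : ⁅⁅bas_a, bas_b⁆, bas_a⁆ = 1 := by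
  conv_lhs => rw [commutator_bas_a_bas_b, bas_a_eq, ← map_commutatorElement]
  simp [commutatorElement_def, ← Prod.one_eq_mk]

theorem psiInv_commutator_bas_a_bas_b_one :
    psiInv (⁅bas_a, bas_b⁆, 1) = ⁅bas_b * bas_b, bas_b⁻¹ * bas_a * bas_b⁆ := by
  rw [bas_b_mul_bas_b, mul_assoc, bas_a_mul_bas_b, inv_mul_cancel_left, ← map_commutatorElement]
  simp [commutatorElement_def]

theorem psiInv_bas_b_bas_b_inv : psiInv (bas_b, bas_b⁻¹) = ⁅bas_b⁻¹, bas_a⁆ := by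
  rw [commutatorElement_def, inv_inv, mul_assoc bas_b⁻¹, bas_a_mul_bas_b, inv_mul_cancel_left,
    bas_a_eq, ← map_inv, ← map_mul]
  simp

theorem bas_a_mem_basilica : bas_a ∈ Basilica := subset_closure (by simp)

theorem bas_b_mem_basilica : bas_b ∈ Basilica := subset_closure (by simp)

def bCommutator : Subgroup (AutT 2) :=
  closure (insert bas_b ((⁅Basilica, Basilica⁆ : Subgroup (AutT 2)) : Set (AutT 2)))

theorem bas_b_mem_bCommutator : bas_b ∈ bCommutator := subset_closure (Set.mem_insert _ _)

theorem commutator_le_bCommutator : ⁅Basilica, Basilica⁆ ≤ bCommutator :=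
  fun _ hx => subset_closure (Set.mem_insert_of_mem _ hx)

theorem bCommutator_le_basilica : bCommutator ≤ Basilica :=
  (closure_le _).mpr (Set.insert_subset bas_b_mem_basilica (commutator_le_self _))

theorem basilica_le_normalizer_bCommutator : Basilica ≤ normalizer (bCommutator : Set (AutT 2)) :=
  le_normalizer_iff_commutator_le_right.mpr
    ((commutator_mono le_rfl bCommutator_le_basilica).trans commutator_le_bCommutator)

theorem commutator_bCommutator_le :
    ⁅bCommutator, bCommutator⁆ ≤ ⁅⁅Basilica, Basilica⁆, Basilica⁆ := by
  refine commutator_closure_le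
    (bCommutator_le_basilica.trans (normalizer_commutator_ge_right _ _)) ?_
  have hG' : ⁅Basilica, Basilica⁆ ≤ Basilica := commutator_le_self _
  rintro s (rfl | hs) t (rfl | ht)
  · rw [commutatorElement_self]; exact one_mem _
  · rw [← commutatorElement_inv]; exact inv_mem (commutator_mem_commutator ht bas_b_mem_basilica)
  · exact commutator_mem_commutator hs bas_b_mem_basilica
  · exact commutator_mem_commutator hs (hG' ht)

theorem basilica_le_normalizer_map_psiInv_prod_bCommutator :
    Basilica ≤ normalizer ((bCommutator.prod bCommutator).map psiInv : Set (AutT 2)) := by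
  have hψ := map_psiInv_prod_le_normalizer basilica_le_normalizer_bCommutator
  refine (closure_le _).mpr (Set.insert_subset_iff.mpr ⟨?_, Set.singleton_subset_iff.mpr ?_⟩)
  · rw [bas_a_eq]
    exact hψ (mem_map_of_mem _ ⟨one_mem _, bas_b_mem_basilica⟩)
  · rw [bas_b_eq]
    exact mul_mem (hψ (mem_map_of_mem _ ⟨bas_a_mem_basilica, one_mem _⟩))
      (rootSwap_mem_normalizer _)

theorem commutator_le_map_psiInv_prod_bCommutator :
    ⁅Basilica, Basilica⁆ ≤ (bCommutator.prod bCommutator).map psiInv := by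
  refine commutator_closure_pair_le basilica_le_normalizer_map_psiInv_prod_bCommutator ?_
  rw [commutator_bas_a_bas_b]
  refine mem_map_of_mem _ (mem_prod.mpr ⟨?_, bas_b_mem_bCommutator⟩)
  rw [show bas_a * bas_b⁻¹ * bas_a⁻¹ = ⁅bas_a, bas_b⁻¹⁆ * bas_b⁻¹ by group]
  exact mul_mem (commutator_le_bCommutator (commutator_mem_commutator bas_a_mem_basilica
    (inv_mem bas_b_mem_basilica))) (inv_mem bas_b_mem_bCommutator)

theorem commutator_commutator_le_map_psiInv_prod :
    ⁅⁅Basilica, Basilica⁆, ⁅Basilica, Basilica⁆⁆ ≤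
      ((⁅⁅Basilica, Basilica⁆, Basilica⁆ : Subgroup (AutT 2)).prod
        ⁅⁅Basilica, Basilica⁆, Basilica⁆).map psiInv :=
  calc ⁅⁅Basilica, Basilica⁆, ⁅Basilica, Basilica⁆⁆
      ≤ ⁅(bCommutator.prod bCommutator).map psiInv,
          (bCommutator.prod bCommutator).map psiInv⁆ :=
        commutator_mono commutator_le_map_psiInv_prod_bCommutator
          commutator_le_map_psiInv_prod_bCommutator
    _ = (⁅bCommutator, bCommutator⁆.prod ⁅bCommutator, bCommutator⁆).map psiInv := by
        rw [← map_commutator, commutator_prod_prod]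
    _ ≤ _ := map_mono (prod_mono commutator_bCommutator_le commutator_bCommutator_le)

theorem basilica_le_normalizer_commutator_commutator :
    Basilica ≤ normalizer
      ((⁅⁅Basilica, Basilica⁆, ⁅Basilica, Basilica⁆⁆ : Subgroup (AutT 2)) : Set (AutT 2)) :=
  le_normalizer_commutator (normalizer_commutator_ge_left _ _) (normalizer_commutator_ge_left _ _)

theorem exists_psiInv_mem_basilica {g : AutT 2} (hg : g ∈ Basilica) :
    ∃ y, psiInv (g, y) ∈ Basilica := by
  suffices Basilica ≤ (Basilica.comap psiInv).map (MonoidHom.fst _ _) by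
    obtain ⟨⟨g, y⟩, hgy, rfl⟩ := this hg
    exact ⟨y, hgy⟩
  refine (closure_le _).mpr (Set.insert_subset_iff.mpr ⟨?_, Set.singleton_subset_iff.mpr ?_⟩)
  · refine ⟨(bas_a, bas_a), ?_, rfl⟩
    rw [SetLike.mem_coe, mem_comap, ← bas_b_mul_bas_b]
    exact mul_mem bas_b_mem_basilica bas_b_mem_basilica
  · refine ⟨(bas_b, 1), ?_, rfl⟩
    rw [SetLike.mem_coe, mem_comap, ← inv_mul_cancel_left bas_b (psiInv _), ← bas_a_mul_bas_b]
    exact mul_mem (inv_mem bas_b_mem_basilica) (mul_mem bas_a_mem_basilica bas_b_mem_basilica)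

theorem basilica_le_normalizer_comap_psiInv_inl {N : Subgroup (AutT 2)}
    (hN : Basilica ≤ normalizer (N : Set (AutT 2))) :
    Basilica ≤ normalizer (N.comap (psiInv.comp (MonoidHom.inl _ _)) : Set (AutT 2)) := by
  intro g hg
  obtain ⟨y, hy⟩ := exists_psiInv_mem_basilica hg
  refine mem_normalizer_iff.mpr fun z => ?_
  have hconj :
      psiInv (g * z * g⁻¹, 1) = psiInv (g, y) * psiInv (z, 1) * (psiInv (g, y))⁻¹ := by
    rw [← map_inv, ← map_mul, ← map_mul]; simp
  simp only [mem_comap, MonoidHom.coe_comp, Function.comp_apply, MonoidHom.inl_apply, hconj]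
  exact mem_normalizer_iff.mp (hN hy) _

theorem psiInv_one_mem_iff {N : Subgroup (AutT 2)} (hb : bas_b ∈ normalizer (N : Set (AutT 2)))
    (z : AutT 2) : psiInv (1, z) ∈ N ↔ psiInv (z, 1) ∈ N := by
  rw [mem_normalizer_iff.mp hb (psiInv (z, 1)), bas_b_conj_psiInv]
  simp

theorem psiInv_commutator_commutator_bas_a_bas_b_bas_b_one_mem :
    psiInv (⁅⁅bas_a, bas_b⁆, bas_b⁆, 1) ∈
      (⁅⁅Basilica, Basilica⁆, ⁅Basilica, Basilica⁆⁆ : Subgroup (AutT 2)) := by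
  have h : psiInv (⁅⁅bas_a, bas_b⁆, bas_b⁆, 1) =
      ⁅psiInv (⁅bas_a, bas_b⁆, 1), psiInv (bas_b, bas_b⁻¹)⁆ := by
    rw [← map_commutatorElement]; simp [commutatorElement_def]
  have ha := bas_a_mem_basilica
  have hb := bas_b_mem_basilica
  rw [h, psiInv_commutator_bas_a_bas_b_one, psiInv_bas_b_bas_b_inv]
  exact commutator_mem_commutator
    (commutator_mem_commutator (mul_mem hb hb) (mul_mem (mul_mem (inv_mem hb) ha) hb))
    (commutator_mem_commutator (inv_mem hb) ha)

theorem map_psiInv_prod_le_commutator_commutator :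
    ((⁅⁅Basilica, Basilica⁆, Basilica⁆ : Subgroup (AutT 2)).prod
        ⁅⁅Basilica, Basilica⁆, Basilica⁆).map psiInv ≤
      ⁅⁅Basilica, Basilica⁆, ⁅Basilica, Basilica⁆⁆ := by
  have hN := basilica_le_normalizer_commutator_commutator
  have hγ₃ : (⁅⁅Basilica, Basilica⁆, Basilica⁆ : Subgroup (AutT 2)) ≤
      (⁅⁅Basilica, Basilica⁆, ⁅Basilica, Basilica⁆⁆ : Subgroup (AutT 2)).comap
        (psiInv.comp (MonoidHom.inl _ _)) := by
    refine commutator_commutator_closure_pair_le (basilica_le_normalizer_comap_psiInv_inl hN) ?_ ?_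
    · rw [commutator_commutator_bas_a_bas_b_bas_a]; exact one_mem _
    · exact psiInv_commutator_commutator_bas_a_bas_b_bas_b_one_mem
  rw [map_le_iff_le_comap, prod_le_iff, map_le_iff_le_comap, map_le_iff_le_comap, comap_comap,
    comap_comap]
  refine ⟨hγ₃, fun z hz => ?_⟩
  rw [mem_comap, MonoidHom.comp_apply, MonoidHom.inr_apply,
    psiInv_one_mem_iff (hN bas_b_mem_basilica)]
  exact hγ₃ hz

theorem commutator_commutator_basilica_eq :
    ⁅⁅Basilica, Basilica⁆, ⁅Basilica, Basilica⁆⁆ =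
      ((⁅⁅Basilica, Basilica⁆, Basilica⁆ : Subgroup (AutT 2)).prod
        ⁅⁅Basilica, Basilica⁆, Basilica⁆).map psiInv :=
  le_antisymm commutator_commutator_le_map_psiInv_prod map_psiInv_prod_le_commutator_commutator

/-- Lemma 4.12(1): for the Basilica group `G`, the second derived
subgroup satisfies `ψ(G'') = γ₃(G) × γ₃(G)`, where `γ₃(G) = [[G,G],G]` is the third
term of the lower central series: `G''` consists exactly of the tree automorphisms
whose two first-level sections lie in `γ₃(G)`. -/
theorem stmt_16 :
    ((⁅⁅Basilica, Basilica⁆, ⁅Basilica, Basilica⁆⁆ : Subgroup (AutT 2)) :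
        Set (AutT 2)) =
      {f : AutT 2 | ∃ g₀ ∈ ⁅⁅Basilica, Basilica⁆, Basilica⁆,
        ∃ g₁ ∈ ⁅⁅Basilica, Basilica⁆, Basilica⁆, ∀ w : Vert 2,
          (f : Equiv.Perm (Vert 2)) (0 :: w) = 0 :: (g₀ : Equiv.Perm (Vert 2)) w ∧
          (f : Equiv.Perm (Vert 2)) (1 :: w) = 1 :: (g₁ : Equiv.Perm (Vert 2)) w} := by
  rw [commutator_commutator_basilica_eq]
  ext f
  exact mem_map_psiInv_prod_iff
end
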